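/- Let R be a complete asymmetric relation on a finite set V together with an equivalence-like symmetric relation E (i.e., for each pair of distinct vertices exactly one of u→v, v→u, or u~v holds). If the associated complete mixed graph has no directed cycle, then the relation ~ (extended with reflexivity) is an equivalence relation, and the directed edges descend to a strict total order on the equivalence classes. -/

import Mathlib

/-! A directed triangle is a directed cycle, so in a complete mixed graph without directed cycles a
mixed path `a – b – c` through at least one directed edge forces the edge between `a` and `c` to be
directed from `a` to `c`: an edge `c → a` or `a ~ c` would close a directed triangle. Transitivity
of `→`, transitivity of `~` and the compatibility of `→` with `~` are all instances of this rule. -/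

/-- A directed cycle of a mixed graph. -/
def HasDirCycle {V : Type*} (dir und : V → V → Prop) : Prop :=
  ∃ (n : ℕ), 3 ≤ n ∧ ∃ f : ZMod n → V, Function.Injective f ∧
    (∀ i : ZMod n, dir (f i) (f (i + 1)) ∨ und (f i) (f (i + 1))) ∧
    (∃ i : ZMod n, dir (f i) (f (i + 1)))

section MixedGraph

variable {V : Type*} {dir sim : V → V → Prop}

theorem hasDirCycle_of_triangle {und : V → V → Prop} {a b c : V}
    (hab : a ≠ b) (hbc : b ≠ c) (hca : c ≠ a)
    (e₁ : dir a b ∨ und a b) (e₂ : dir b c ∨ und b c) (e₃ : dir c a ∨ und c a)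
    (hd : dir a b ∨ dir b c ∨ dir c a) : HasDirCycle dir und := by
  refine ⟨3, le_rfl, ![a, b, c], ?_, ?_, ?_⟩
  · intro i j hij
    fin_cases i <;> fin_cases j <;> first | rfl | simp_all [eq_comm]
  · intro i
    fin_cases i
    exacts [e₁, e₂, e₃]
  · rcases hd with h | h | h
    exacts [⟨0, h⟩, ⟨1, h⟩, ⟨2, h⟩]

def IsCompleteMixedGraph (dir sim : V → V → Prop) : Prop :=
  ∀ u v : V, u ≠ v →
    (dir u v ∧ ¬ dir v u ∧ ¬ sim u v) ∨
    (dir v u ∧ ¬ dir u v ∧ ¬ sim u v) ∨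
    (sim u v ∧ ¬ dir u v ∧ ¬ dir v u)

namespace IsCompleteMixedGraph

theorem sim_symm (hG : IsCompleteMixedGraph dir sim) {u v : V} (h : sim u v) : sim v u := by
  rcases eq_or_ne u v with rfl | hne
  · exact h
  have huv := hG u v hne
  have hvu := hG v u hne.symm
  tauto

theorem not_dir_and_not_sim_of_dir (hG : IsCompleteMixedGraph dir sim) (hdirr : ∀ v, ¬ dir v v)
    {u v : V} (h : dir u v) : ¬ dir v u ∧ ¬ sim u v := by
  have hne : u ≠ v := by
    rintro rfl
    exact hdirr u h
  rcases hG u v hne with ⟨-, h₁, h₂⟩ | ⟨-, h₁, -⟩ | ⟨-, h₁, -⟩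
  exacts [⟨h₁, h₂⟩, (h₁ h).elim, (h₁ h).elim]

theorem dir_asymm (hG : IsCompleteMixedGraph dir sim) (hdirr : ∀ v, ¬ dir v v)
    {u v : V} (h : dir u v) : ¬ dir v u :=
  (hG.not_dir_and_not_sim_of_dir hdirr h).1

theorem not_sim_of_dir (hG : IsCompleteMixedGraph dir sim) (hdirr : ∀ v, ¬ dir v v)
    {u v : V} (h : dir u v) : ¬ sim u v :=
  (hG.not_dir_and_not_sim_of_dir hdirr h).2

theorem dir_of_mixed_path (hG : IsCompleteMixedGraph dir sim) (hdirr : ∀ v, ¬ dir v v)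
    (hnocyc : ¬ HasDirCycle dir sim) {a b c : V} (hab : dir a b ∨ sim a b)
    (hbc : dir b c ∨ sim b c) (hd : dir a b ∨ dir b c) (hac : a ≠ c) : dir a c := by
  rcases eq_or_ne a b with rfl | hab'
  · exact hd.resolve_left (hdirr a)
  rcases eq_or_ne b c with rfl | hbc'
  · exact hd.resolve_right (hdirr b)
  have no_edge_to_a : ¬ (dir c a ∨ sim c a) := fun hca =>
    hnocyc (hasDirCycle_of_triangle hab' hbc' hac.symm hab hbc hca (hd.elim .inl (.inr ∘ .inl)))
  rcases hG a c hac with ⟨h, -⟩ | ⟨h, -⟩ | ⟨h, -⟩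
  · exact h
  · exact (no_edge_to_a (.inl h)).elim
  · exact (no_edge_to_a (.inr (hG.sim_symm h))).elim

theorem dir_trans (hG : IsCompleteMixedGraph dir sim) (hdirr : ∀ v, ¬ dir v v)
    (hnocyc : ¬ HasDirCycle dir sim) {a b c : V} (hab : dir a b) (hbc : dir b c) : dir a c := by
  refine hG.dir_of_mixed_path hdirr hnocyc (.inl hab) (.inl hbc) (.inl hab) ?_
  rintro rfl
  exact hG.dir_asymm hdirr hab hbc

theorem dir_of_sim_left (hG : IsCompleteMixedGraph dir sim) (hdirr : ∀ v, ¬ dir v v)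
    (hnocyc : ¬ HasDirCycle dir sim) {a a' b : V} (ha : sim a a') (h : dir a b) : dir a' b := by
  refine hG.dir_of_mixed_path hdirr hnocyc (.inr (hG.sim_symm ha)) (.inl h) (.inr h) ?_
  rintro rfl
  exact hG.not_sim_of_dir hdirr h ha

theorem dir_of_sim_right (hG : IsCompleteMixedGraph dir sim) (hdirr : ∀ v, ¬ dir v v)
    (hnocyc : ¬ HasDirCycle dir sim) {a b b' : V} (h : dir a b) (hb : sim b b') : dir a b' := by
  refine hG.dir_of_mixed_path hdirr hnocyc (.inl h) (.inr hb) (.inl h) ?_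
  rintro rfl
  exact hG.not_sim_of_dir hdirr h (hG.sim_symm hb)

theorem sim_trans (hG : IsCompleteMixedGraph dir sim) (hdirr : ∀ v, ¬ dir v v)
    (hnocyc : ¬ HasDirCycle dir sim) {a b c : V} (hab : sim a b) (hbc : sim b c) (hac : a ≠ c) :
    sim a c := by
  rcases hG a c hac with ⟨h, -⟩ | ⟨h, -⟩ | ⟨h, -⟩
  · exact absurd hbc (hG.not_sim_of_dir hdirr (hG.dir_of_sim_left hdirr hnocyc hab h))
  · exact absurd (hG.sim_symm hbc)
      (hG.not_sim_of_dir hdirr (hG.dir_of_sim_right hdirr hnocyc h hab))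
  · exact h

theorem equivalence_eq_or_sim (hG : IsCompleteMixedGraph dir sim) (hdirr : ∀ v, ¬ dir v v)
    (hnocyc : ¬ HasDirCycle dir sim) : Equivalence (fun u v : V => u = v ∨ sim u v) where
  refl _ := .inl rfl
  symm := Or.imp Eq.symm hG.sim_symm
  trans := by
    rintro a b c (rfl | hab) (rfl | hbc)
    · exact .inl rfl
    · exact .inr hbc
    · exact .inr hab
    · exact (eq_or_ne a c).imp_right (hG.sim_trans hdirr hnocyc hab hbc)

theorem dir_of_eq_or_sim (hG : IsCompleteMixedGraph dir sim) (hdirr : ∀ v, ¬ dir v v)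
    (hnocyc : ¬ HasDirCycle dir sim) {a a' b b' : V} (ha : a = a' ∨ sim a a')
    (hb : b = b' ∨ sim b b') (h : dir a b) : dir a' b' := by
  have h' : dir a' b := ha.elim (· ▸ h) (hG.dir_of_sim_left hdirr hnocyc · h)
  exact hb.elim (· ▸ h') (hG.dir_of_sim_right hdirr hnocyc h' ·)

theorem dir_congr (hG : IsCompleteMixedGraph dir sim) (hdirr : ∀ v, ¬ dir v v)
    (hnocyc : ¬ HasDirCycle dir sim) {a a' b b' : V} (ha : a = a' ∨ sim a a')
    (hb : b = b' ∨ sim b b') : dir a b ↔ dir a' b' :=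
  ⟨hG.dir_of_eq_or_sim hdirr hnocyc ha hb,
    hG.dir_of_eq_or_sim hdirr hnocyc (ha.imp Eq.symm hG.sim_symm) (hb.imp Eq.symm hG.sim_symm)⟩

theorem dir_or_dir_of_not_eq_or_sim (hG : IsCompleteMixedGraph dir sim) {a b : V}
    (h : ¬ (a = b ∨ sim a b)) : dir a b ∨ dir b a := by
  rcases hG a b (fun hab => h (.inl hab)) with ⟨hab, -⟩ | ⟨hba, -⟩ | ⟨hab, -⟩
  exacts [.inl hab, .inr hba, (h (.inr hab)).elim]

end IsCompleteMixedGraph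

end MixedGraph

theorem no_directed_cycle_gives_order_on_classes_general {V : Type*}
    (dir sim : V → V → Prop)
    (hdirr : ∀ v, ¬ dir v v)
    (hcomplete : ∀ u v : V, u ≠ v →
      (dir u v ∧ ¬ dir v u ∧ ¬ sim u v) ∨
      (dir v u ∧ ¬ dir u v ∧ ¬ sim u v) ∨
      (sim u v ∧ ¬ dir u v ∧ ¬ dir v u))
    (hnocyc : ¬ HasDirCycle dir sim) :
    Equivalence (fun u v : V => u = v ∨ sim u v) ∧
    (∀ a a' b b' : V, (a = a' ∨ sim a a') → (b = b' ∨ sim b b') →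
      (dir a b ↔ dir a' b')) ∧
    (∀ a b c : V, dir a b → dir b c → dir a c) ∧
    (∀ a b : V, dir a b → ¬ dir b a) ∧
    (∀ a b : V, ¬ (a = b ∨ sim a b) → dir a b ∨ dir b a) := by
  have hG : IsCompleteMixedGraph dir sim := hcomplete
  exact ⟨hG.equivalence_eq_or_sim hdirr hnocyc,
    fun _ _ _ _ => hG.dir_congr hdirr hnocyc,
    fun _ _ _ => hG.dir_trans hdirr hnocyc,
    fun _ _ => hG.dir_asymm hdirr,
    fun _ _ => hG.dir_or_dir_of_not_eq_or_sim⟩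

/-- If the complete mixed graph associated to a relation system (u→v, v→u, or
u~v for each pair of distinct vertices) has no directed cycle, then ~ extended
with reflexivity is an equivalence relation and the directed edges descend to
a strict total order on the equivalence classes. -/
theorem no_directed_cycle_gives_order_on_classes {V : Type*} [Fintype V]
    (dir sim : V → V → Prop)
    (hsimm : ∀ u v, sim u v → sim v u)
    (hdirr : ∀ v, ¬ dir v v)
    (hcomplete : ∀ u v : V, u ≠ v →
      (dir u v ∧ ¬ dir v u ∧ ¬ sim u v) ∨
      (dir v u ∧ ¬ dir u v ∧ ¬ sim u v) ∨
      (sim u v ∧ ¬ dir u v ∧ ¬ dir v u))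
    (hnocyc : ¬ HasDirCycle dir sim) :
    Equivalence (fun u v : V => u = v ∨ sim u v) ∧
    (∀ a a' b b' : V, (a = a' ∨ sim a a') → (b = b' ∨ sim b b') →
      (dir a b ↔ dir a' b')) ∧
    (∀ a b c : V, dir a b → dir b c → dir a c) ∧
    (∀ a b : V, dir a b → ¬ dir b a) ∧
    (∀ a b : V, ¬ (a = b ∨ sim a b) → dir a b ∨ dir b a) :=
  no_directed_cycle_gives_order_on_classes_general dir sim hdirr hcomplete hnocyc
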